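/- For sufficiently large δ, every connected graph G of order n with minimum degree δ satisfies rvc(G) ≤ (b ln δ) n / δ for any constant b > 2.5. -/

import Mathlib

open SimpleGraph

/-- A coloring `c` is a rainbow vertex-coloring witness with `k` colors: any two vertices are
joined by a path whose internal vertices have distinct colors, all among the first `k` colors. -/
def IsRainbowVColoring {V : Type*} (G : SimpleGraph V) (c : V → ℕ) (k : ℕ) : Prop :=
  ∀ u v : V, ∃ p : G.Walk u v, p.IsPath ∧ (p.support.tail.dropLast.map c).Nodup ∧
    ∀ w ∈ p.support.tail.dropLast, c w < k

/-- The rainbow vertex-connection number. -/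
noncomputable def rvc {V : Type*} (G : SimpleGraph V) : ℕ :=
  sInf {k : ℕ | ∃ c : V → ℕ, IsRainbowVColoring G c k}

/-!
Coloring the vertices of a connected dominating set `B` with distinct colors shows `rvc G ≤ |B|`:
any two vertices are joined by a path whose interior lies in `B`. Instead of the Kleitman–West
spanning-tree bound, a connected dominating set is grown greedily from one vertex. If some vertex
is at distance at least 3 from the current connected set `A`, a path to a vertex `x` at distance
exactly 3 costs 3 vertices and dominates all of `N[x]`, at least `δ + 1` new vertices. Otherwise
every vertex is within distance 2, and a vertex whose closed neighbourhood meets the most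
undominated vertices (at least a `(δ + 1)/n` fraction of them, by double counting) is attached at a
cost of 2. A potential function of the number of undominated vertices bounds the total cost by
`n/(δ + 1) · (2 ln (δ + 1) + 5) + 3`, which is below `b ln δ · n/δ` as soon as `ln δ ≥ 20`.
-/

open Finset Real

/-- With `θ = ⌈t⌉`, this pays for the steps of cost 2 that remove a `1/t` fraction of the `m`
undominated vertices: at most `t log (m/θ)` of them while `m > θ`, and then at most `θ`.
The far steps are paid for by the term `3 m / d` of `dominationPotential`. -/
noncomputable def coverPotential (t : ℝ) (m : ℕ) : ℝ :=
  2 * (min m ⌈t⌉₊ : ℕ) + 2 * t * log ((max m ⌈t⌉₊ : ℕ) / ⌈t⌉₊)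

section coverPotential

variable {t : ℝ} {m m' c : ℕ}

private theorem log_max_ceil_div_nonneg (ht : 0 < t) (m : ℕ) :
    0 ≤ log ((max m ⌈t⌉₊ : ℕ) / ⌈t⌉₊) := by
  have hθ : (0 : ℝ) < ⌈t⌉₊ := by exact_mod_cast Nat.ceil_pos.2 ht
  exact log_nonneg ((one_le_div hθ).2 (by exact_mod_cast le_max_right m ⌈t⌉₊))

theorem coverPotential_nonneg (ht : 0 < t) (m : ℕ) : 0 ≤ coverPotential t m := by
  have := log_max_ceil_div_nonneg ht m
  unfold coverPotential
  positivity

theorem coverPotential_mono (ht : 0 < t) : Monotone (coverPotential t) := by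
  intro m' m h
  have hθ : (0 : ℝ) < ⌈t⌉₊ := by exact_mod_cast Nat.ceil_pos.2 ht
  have hmax : (0 : ℝ) < (max m' ⌈t⌉₊ : ℕ) := hθ.trans_le (by exact_mod_cast le_max_right _ _)
  unfold coverPotential
  gcongr

theorem coverPotential_add_two_le (ht : 0 < t) (h : m' + c ≤ m) (hc₀ : 0 < c)
    (hc : (m : ℝ) ≤ t * c) : coverPotential t m' + 2 ≤ coverPotential t m := by
  set θ := ⌈t⌉₊
  have hθ : 0 < θ := Nat.ceil_pos.2 ht
  unfold coverPotential
  rcases le_or_gt θ m' with hθm' | hm'θ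
  · have hm'₀ : (0 : ℝ) < m' := by exact_mod_cast hθ.trans_le hθm'
    have hm₀ : (0 : ℝ) < m := by exact_mod_cast (by omega : 0 < m)
    rw [min_eq_right hθm', min_eq_right (by omega), max_eq_left hθm', max_eq_left (by omega),
      log_div hm'₀.ne' (by positivity), log_div hm₀.ne' (by positivity)]
    -- `m' ≤ (1 - 1/t) m`, so `log m` drops by at least `1/t`
    have hshrink : 1 ≤ t * (1 - (m / m' : ℝ)⁻¹) := by
      have : (m' : ℝ) + c ≤ m := by exact_mod_cast h
      rw [inv_div, mul_one_sub, le_sub_iff_add_le, ← le_sub_iff_add_le', mul_div_assoc',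
        div_le_iff₀ hm₀]
      nlinarith
    have := one_sub_inv_le_log_of_pos (div_pos hm₀ hm'₀)
    rw [log_div hm₀.ne' hm'₀.ne'] at this
    nlinarith
  · have hm'm : (m' : ℝ) + 1 ≤ m := by exact_mod_cast (by omega : m' + 1 ≤ m)
    rcases le_or_gt θ m with hθm | hmθ
    · rw [min_eq_left hm'θ.le, min_eq_right hθm, max_eq_right hm'θ.le, div_self (by positivity),
        log_one]
      have := log_max_ceil_div_nonneg ht m
      have : (m' : ℝ) + 1 ≤ θ := by exact_mod_cast hm'θ
      nlinarith
    · rw [min_eq_left hm'θ.le, min_eq_left hmθ.le, max_eq_right hm'θ.le, max_eq_right hmθ.le]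
      linarith

theorem coverPotential_le (ht : 0 < t) {D : ℝ} (hD : 1 ≤ D) (hm : m ≤ t * D) :
    coverPotential t m ≤ 2 * t * log D + 2 * t + 2 := by
  set θ := ⌈t⌉₊
  have hθ : (0 : ℝ) < θ := by exact_mod_cast Nat.ceil_pos.2 ht
  have hθt : (θ : ℝ) ≤ t + 1 := (Nat.ceil_lt_add_one ht.le).le
  have hmin : ((min m θ : ℕ) : ℝ) ≤ θ := by exact_mod_cast min_le_right m θ
  have hmax : ((max m θ : ℕ) : ℝ) / θ ≤ D := by
    rw [div_le_iff₀ hθ, Nat.cast_max, max_le_iff]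
    exact ⟨hm.trans (by nlinarith [Nat.le_ceil t]), by nlinarith⟩
  have hlog : log (((max m θ : ℕ) : ℝ) / θ) ≤ log D :=
    log_le_log (div_pos (hθ.trans_le (by exact_mod_cast le_max_right m θ)) hθ) hmax
  unfold coverPotential
  nlinarith

end coverPotential

noncomputable def dominationPotential (n d m : ℕ) : ℝ :=
  3 * m / d + coverPotential (n / d) m

section dominationPotential

variable {n d m m' c : ℕ}

theorem dominationPotential_nonneg (hn : 0 < n) (hd : 0 < d) (m : ℕ) :
    0 ≤ dominationPotential n d m := by
  have := coverPotential_nonneg (t := n / d) (by positivity) m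
  unfold dominationPotential
  positivity

theorem dominationPotential_add_three_le (hn : 0 < n) (hd : 0 < d) (h : m' + d ≤ m) :
    dominationPotential n d m' + 3 ≤ dominationPotential n d m := by
  have hcover := coverPotential_mono (t := n / d) (by positivity) (by omega : m' ≤ m)
  have hlin : 3 * (m' : ℝ) / d + 3 ≤ 3 * m / d := by
    rw [div_add' _ _ _ (by positivity), div_le_div_iff_of_pos_right (by positivity)]
    have : (m' : ℝ) + d ≤ m := by exact_mod_cast h
    linarith
  unfold dominationPotential
  linarith

theorem dominationPotential_add_two_le (hn : 0 < n) (hd : 0 < d) (h : m' + c ≤ m) (hc₀ : 0 < c)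
    (hc : d * m ≤ n * c) : dominationPotential n d m' + 2 ≤ dominationPotential n d m := by
  have hcover := coverPotential_add_two_le (t := n / d) (by positivity) h hc₀ (by
    rw [div_mul_eq_mul_div, le_div_iff₀ (by positivity)]
    exact_mod_cast (mul_comm m d ▸ hc))
  have hlin : 3 * (m' : ℝ) / d ≤ 3 * m / d := by
    gcongr
    exact_mod_cast (by omega : m' ≤ m)
  unfold dominationPotential
  linarith

theorem dominationPotential_le (hn : 0 < n) (hd : 0 < d) (hm : m ≤ n) :
    dominationPotential n d m ≤ n / d * (2 * log d + 5) + 2 := by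
  have hcover := coverPotential_le (t := n / d) (m := m) (by positivity) (D := d)
    (by exact_mod_cast hd) (by rw [div_mul_cancel₀ _ (by positivity)]; exact_mod_cast hm)
  have hlin : 3 * (m : ℝ) / d ≤ 3 * (n / d) := by
    rw [mul_div_assoc]
    gcongr
  unfold dominationPotential
  linarith

end dominationPotential

namespace SimpleGraph

variable {V : Type*} {G : SimpleGraph V} {u v w : V}

theorem Walk.IsPath.ne_of_mem_support_tail_dropLast {p : G.Walk u v} (hp : p.IsPath)
    (hw : w ∈ p.support.tail.dropLast) : w ≠ u ∧ w ≠ v := by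
  have hnd := hp.support_nodup
  have hcons := p.cons_tail_support
  have hconcat := p.dropLast_support_concat
  grind

theorem Walk.mem_support_of_length_le_one {p : G.Walk u v} (hp : p.length ≤ 1)
    (hw : w ∈ p.support) : w = u ∨ w = v := by
  cases p with
  | nil => simp_all
  | cons h q => cases q with
    | nil => simp_all
    | cons h' q' => simp at hp

theorem Connected.exists_walk_support_subset {s : Set V} (hs : (G.induce s).Connected)
    (hu : u ∈ s) (hv : v ∈ s) : ∃ p : G.Walk u v, ∀ x ∈ p.support, x ∈ s := by
  obtain ⟨p⟩ := hs.preconnected ⟨u, hu⟩ ⟨v, hv⟩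
  refine ⟨p.map (Embedding.induce s).toHom, fun x hx ↦ ?_⟩
  obtain ⟨y, -, rfl⟩ := List.mem_map.1 (Walk.support_map _ p ▸ hx)
  exact y.2

section Union

variable [DecidableEq V] {A : Finset V} {a : V}

theorem Walk.card_union_support_toFinset_le (p : G.Walk a w) (ha : a ∈ A) :
    #(A ∪ p.support.toFinset) ≤ #A + p.length := by
  have hunion : A ∪ p.support.toFinset = A ∪ p.support.tail.toFinset := by
    conv_lhs => rw [← p.cons_tail_support]
    rw [List.toFinset_cons, union_insert, insert_eq_of_mem (mem_union_left _ ha)]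
  have htail : p.support.tail.length = p.length := by simp [p.length_support]
  calc #(A ∪ p.support.toFinset) ≤ #A + #p.support.tail.toFinset := hunion ▸ card_union_le _ _
    _ ≤ #A + p.length := by have := p.support.tail.toFinset_card_le; omega

theorem Walk.connected_induce_union_support (hA : (G.induce (A : Set V)).Connected)
    (p : G.Walk a w) (ha : a ∈ A) :
    (G.induce ((A ∪ p.support.toFinset : Finset V) : Set V)).Connected := by
  rw [coe_union, List.coe_toFinset]
  exact induce_union_connected hA.preconnected p.connected_induce_support.preconnected
    ⟨a, ha, p.start_mem_support⟩

end Union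

variable [Fintype V]

variable (G) in
open scoped Classical in
noncomputable def cthickening (A : Finset V) (k : ℕ) : Finset V :=
  {v | ∃ a ∈ A, ∃ p : G.Walk a v, p.length ≤ k}

variable (G) in
def IsConnectedDominating (B : Finset V) : Prop :=
  (G.induce (B : Set V)).Connected ∧ G.cthickening B 1 = univ

variable {A A' : Finset V} {k l : ℕ}

theorem mem_cthickening : v ∈ G.cthickening A k ↔ ∃ a ∈ A, ∃ p : G.Walk a v, p.length ≤ k := by
  simp [cthickening]

theorem self_subset_cthickening (A : Finset V) (k : ℕ) : A ⊆ G.cthickening A k :=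
  fun a ha ↦ mem_cthickening.2 ⟨a, ha, .nil, Nat.zero_le k⟩

theorem cthickening_mono (h : A ⊆ A') (k : ℕ) : G.cthickening A k ⊆ G.cthickening A' k := by
  intro v hv
  obtain ⟨a, ha, p, hp⟩ := mem_cthickening.1 hv
  exact mem_cthickening.2 ⟨a, h ha, p, hp⟩

theorem mem_cthickening_singleton_comm : u ∈ G.cthickening {v} k ↔ v ∈ G.cthickening {u} k := by
  simp only [mem_cthickening, mem_singleton, exists_eq_left]
  exact ⟨fun ⟨p, hp⟩ ↦ ⟨p.reverse, by simpa⟩, fun ⟨p, hp⟩ ↦ ⟨p.reverse, by simpa⟩⟩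

theorem mem_cthickening_add (hu : u ∈ G.cthickening A k) (hv : v ∈ G.cthickening {u} l) :
    v ∈ G.cthickening A (k + l) := by
  obtain ⟨a, ha, p, hp⟩ := mem_cthickening.1 hu
  obtain ⟨q, hq⟩ := by simpa only [mem_cthickening, mem_singleton, exists_eq_left] using hv
  exact mem_cthickening.2 ⟨a, ha, p.append q, by rw [Walk.length_append]; omega⟩

theorem degree_lt_card_cthickening_singleton [DecidableRel G.Adj] (v : V) :
    G.degree v < #(G.cthickening {v} 1) := by
  classical
  have hsub : insert v (G.neighborFinset v) ⊆ G.cthickening {v} 1 := by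
    intro w hw
    rcases mem_insert.1 hw with rfl | hw
    · exact self_subset_cthickening _ _ (mem_singleton_self w)
    · exact mem_cthickening.2 ⟨v, mem_singleton_self v,
        .cons ((G.mem_neighborFinset v w).1 hw) .nil, le_rfl⟩
  calc G.degree v < #(insert v (G.neighborFinset v)) := by
        rw [card_insert_of_notMem (by simp), card_neighborFinset_eq_degree]; omega
    _ ≤ _ := card_le_card hsub

theorem exists_mem_cthickening_succ_notMem (hG : G.Preconnected) (hA : A.Nonempty)
    (hk : G.cthickening A k ≠ univ) :
    ∃ x, x ∈ G.cthickening A (k + 1) ∧ x ∉ G.cthickening A k := by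
  by_contra! hclosed
  have walk_mem : ∀ {x y : V} (p : G.Walk x y), x ∈ G.cthickening A k → y ∈ G.cthickening A k := by
    intro x y p
    induction p with
    | nil => exact id
    | cons h _ ih => exact fun hx ↦ ih (hclosed _ (mem_cthickening_add hx
        (mem_cthickening.2 ⟨_, mem_singleton_self _, .cons h .nil, le_rfl⟩)))
  obtain ⟨a, ha⟩ := hA
  exact hk (eq_univ_of_forall fun y ↦ walk_mem (hG a y).some (self_subset_cthickening A k ha))

theorem rvc_le_card_of_isConnectedDominating {B : Finset V} (hB : G.IsConnectedDominating B) :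
    rvc G ≤ #B := by
  classical
  obtain ⟨hconn, hdom⟩ := hB
  let e := B.equivFin
  let c : V → ℕ := fun x ↦ if hx : x ∈ B then e ⟨x, hx⟩ else 0
  refine Nat.sInf_le ⟨c, fun u v ↦ ?_⟩
  obtain ⟨a, ha, pu, hpu⟩ := mem_cthickening.1 (hdom ▸ mem_univ u)
  obtain ⟨b, hb, pv, hpv⟩ := mem_cthickening.1 (hdom ▸ mem_univ v)
  obtain ⟨q, hq⟩ := hconn.exists_walk_support_subset ha hb
  let p := (pu.reverse.append (q.append pv)).bypass
  have hp : p.IsPath := Walk.bypass_isPath _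
  have hsupp : ∀ x ∈ p.support, x = u ∨ x = v ∨ x ∈ B := by
    intro x hx
    have hx := Walk.support_bypass_subset_support _ hx
    simp only [Walk.mem_support_append_iff, Walk.support_reverse, List.mem_reverse] at hx
    rcases hx with hx | hx | hx
    · rcases Walk.mem_support_of_length_le_one hpu hx with rfl | rfl <;> simp_all
    · exact .inr (.inr (hq x hx))
    · rcases Walk.mem_support_of_length_le_one hpv hx with rfl | rfl <;> simp_all
  have hinternal : ∀ x ∈ p.support.tail.dropLast, x ∈ B := by
    intro x hx
    obtain ⟨hxu, hxv⟩ := hp.ne_of_mem_support_tail_dropLast hx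
    have hsub : p.support.tail.dropLast.Sublist p.support :=
      (List.dropLast_sublist _).trans (List.tail_sublist _)
    exact ((hsupp x (hsub.subset hx)).resolve_left hxu).resolve_left hxv
  refine ⟨p, hp, ?_, fun x hx ↦ ?_⟩
  · refine ((hp.support_nodup.sublist (List.tail_sublist _)).sublist
      (List.dropLast_sublist _)).map_on fun x hx y hy hxy ↦ ?_
    simp only [c, dif_pos (hinternal x hx), dif_pos (hinternal y hy)] at hxy
    exact congrArg Subtype.val (e.injective (Fin.val_injective hxy))
  · simp only [c, dif_pos (hinternal x hx)]
    exact (e _).isLt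

section Domination

variable [DecidableEq V]

variable (G) in
noncomputable def undominated (A : Finset V) : Finset V := (G.cthickening A 1)ᶜ

theorem undominated_anti (h : A ⊆ A') : G.undominated A' ⊆ G.undominated A :=
  compl_subset_compl.2 (cthickening_mono h 1)

theorem exists_extension_of_walk {a : V} (hA : (G.induce (A : Set V)).Connected) (ha : a ∈ A)
    (p : G.Walk a w) :
    ∃ A', A ⊆ A' ∧ (G.induce (A' : Set V)).Connected ∧ #A' ≤ #A + p.length ∧
      #(G.undominated A') + #(G.cthickening {w} 1 ∩ G.undominated A) ≤ #(G.undominated A) := by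
  refine ⟨A ∪ p.support.toFinset, subset_union_left, p.connected_induce_union_support hA ha,
    p.card_union_support_toFinset_le ha, ?_⟩
  have hw : w ∈ A ∪ p.support.toFinset := mem_union_right _ (by simp)
  have hsub : G.undominated (A ∪ p.support.toFinset) ⊆
      G.undominated A \ (G.cthickening {w} 1 ∩ G.undominated A) := by
    intro v hv
    refine mem_sdiff.2 ⟨undominated_anti subset_union_left hv, fun hvw ↦ ?_⟩
    exact (mem_compl.1 hv) (cthickening_mono (singleton_subset_iff.2 hw) 1 (mem_inter.1 hvw).1)
  have := card_le_card hsub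
  rw [card_sdiff_of_subset inter_subset_right] at this
  have := card_le_card (inter_subset_right (s₁ := G.cthickening {w} 1) (s₂ := G.undominated A))
  omega

variable [DecidableRel G.Adj]

theorem exists_far_step (hG : G.Connected) (hA₀ : A.Nonempty)
    (hA : (G.induce (A : Set V)).Connected) (h2 : G.cthickening A 2 ≠ univ) :
    ∃ A', A ⊆ A' ∧ (G.induce (A' : Set V)).Connected ∧ #A' ≤ #A + 3 ∧
      #(G.undominated A') + (G.minDegree + 1) ≤ #(G.undominated A) := by
  obtain ⟨x, hx3, hx2⟩ := exists_mem_cthickening_succ_notMem hG.preconnected hA₀ h2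
  obtain ⟨a, ha, p, hp⟩ := mem_cthickening.1 hx3
  obtain ⟨A', hAA', hA', hcard, hdrop⟩ := exists_extension_of_walk hA ha p
  have hfar : G.cthickening {x} 1 ⊆ G.undominated A := fun z hz ↦
    mem_compl.2 fun hzA ↦ hx2 (mem_cthickening_add hzA (mem_cthickening_singleton_comm.1 hz))
  rw [inter_eq_left.2 hfar] at hdrop
  have := (G.minDegree_le_degree x).trans_lt (degree_lt_card_cthickening_singleton x)
  exact ⟨A', hAA', hA', by omega, by omega⟩

theorem exists_le_card_cthickening_singleton_inter [Nonempty V] (U : Finset V) :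
    ∃ w, (G.minDegree + 1) * #U ≤ Fintype.card V * #(G.cthickening {w} 1 ∩ U) := by
  classical
  have hcount : ∑ w, #(G.cthickening {w} 1 ∩ U) = ∑ u ∈ U, #(G.cthickening {u} 1) := by
    have := sum_card_bipartiteAbove_eq_sum_card_bipartiteBelow (s := univ) (t := U)
      (r := fun w u ↦ u ∈ G.cthickening {w} 1)
    simp only [bipartiteAbove, bipartiteBelow, filter_mem_eq_inter] at this
    simp_rw [mem_cthickening_singleton_comm (u := _) (v := _)] at this
    simpa only [inter_comm U, filter_mem_eq_inter, univ_inter] using this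
  have hsum : ∑ _w : V, (G.minDegree + 1) * #U ≤
      ∑ w, Fintype.card V * #(G.cthickening {w} 1 ∩ U) := by
    rw [sum_const, card_univ, smul_eq_mul, ← mul_sum, hcount, mul_comm (G.minDegree + 1)]
    gcongr
    simpa only [smul_eq_mul] using card_nsmul_le_sum U _ (G.minDegree + 1) fun u _ ↦
      (G.minDegree_le_degree u).trans_lt (degree_lt_card_cthickening_singleton u)
  obtain ⟨w, -, hw⟩ := exists_le_of_sum_le univ_nonempty hsum
  exact ⟨w, hw⟩

theorem exists_near_step [Nonempty V] (hA : (G.induce (A : Set V)).Connected)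
    (h2 : G.cthickening A 2 = univ) :
    ∃ A' c, A ⊆ A' ∧ (G.induce (A' : Set V)).Connected ∧ #A' ≤ #A + 2 ∧
      (G.minDegree + 1) * #(G.undominated A) ≤ Fintype.card V * c ∧
      #(G.undominated A') + c ≤ #(G.undominated A) := by
  obtain ⟨w, hw⟩ := exists_le_card_cthickening_singleton_inter (G := G) (G.undominated A)
  obtain ⟨a, ha, p, hp⟩ := mem_cthickening.1 (h2 ▸ mem_univ w)
  obtain ⟨A', hAA', hA', hcard, hdrop⟩ := exists_extension_of_walk hA ha p
  exact ⟨A', _, hAA', hA', by omega, hw, hdrop⟩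

theorem exists_isConnectedDominating_card_le_add (hG : G.Connected) (hA₀ : A.Nonempty)
    (hA : (G.induce (A : Set V)).Connected) :
    ∃ B, G.IsConnectedDominating B ∧ (#B : ℝ) ≤
      #A + dominationPotential (Fintype.card V) (G.minDegree + 1) #(G.undominated A) := by
  have : Nonempty V := ⟨hA₀.choose⟩
  have hn : 0 < Fintype.card V := Fintype.card_pos
  induction hm : #(G.undominated A) using Nat.strong_induction_on generalizing A with
  | _ m ih =>
  have hΦ := dominationPotential_nonneg hn (Nat.succ_pos G.minDegree)
  rcases (G.undominated A).eq_empty_or_nonempty with hU | hU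
  · exact ⟨A, ⟨hA, (compl_eq_empty_iff _).1 hU⟩, by linarith [hΦ m]⟩
  by_cases h2 : G.cthickening A 2 = univ
  · obtain ⟨A', c, hAA', hA', hcard, hcover, hdrop⟩ := exists_near_step hA h2
    have : 0 < c := Nat.pos_of_mul_pos_left <|
      (Nat.mul_pos (Nat.succ_pos _) hU.card_pos).trans_le hcover
    obtain ⟨B, hB, hBcard⟩ := ih _ (by omega) (hA₀.mono hAA') hA' rfl
    have := dominationPotential_add_two_le hn (Nat.succ_pos _) (hm ▸ hdrop) this (hm ▸ hcover)
    have : (#A' : ℝ) ≤ #A + 2 := by exact_mod_cast hcard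
    exact ⟨B, hB, by linarith⟩
  · obtain ⟨A', hAA', hA', hcard, hdrop⟩ := exists_far_step hG hA₀ hA h2
    obtain ⟨B, hB, hBcard⟩ := ih _ (by omega) (hA₀.mono hAA') hA' rfl
    have := dominationPotential_add_three_le hn (Nat.succ_pos _) (hm ▸ hdrop)
    have : (#A' : ℝ) ≤ #A + 3 := by exact_mod_cast hcard
    exact ⟨B, hB, by linarith⟩

end Domination

theorem exists_isConnectedDominating_card_le [DecidableRel G.Adj] (hG : G.Connected) :
    ∃ B, G.IsConnectedDominating B ∧ (#B : ℝ) ≤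
      Fintype.card V / (G.minDegree + 1) * (2 * log (G.minDegree + 1) + 5) + 3 := by
  classical
  have : Nonempty V := hG.nonempty
  obtain ⟨v⟩ := id this
  obtain ⟨B, hB, hcard⟩ := exists_isConnectedDominating_card_le_add hG (singleton_nonempty v)
    (by rw [coe_singleton, induce_singleton_eq_top]; exact connected_top)
  have := dominationPotential_le (Fintype.card_pos) (Nat.succ_pos G.minDegree)
    (card_le_univ (G.undominated {v}))
  push_cast at this
  rw [card_singleton, Nat.cast_one] at hcard
  exact ⟨B, hB, by linarith⟩

end SimpleGraph

theorem div_add_one_mul_log_add_le_mul_log_div {b δ n : ℝ} (hb : 2.5 < b) (hδ₀ : 0 < δ)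
    (hδ : 20 ≤ log δ) (hδn : δ ≤ n) :
    n / (δ + 1) * (2 * log (δ + 1) + 5) + 3 ≤ b * log δ * n / δ := by
  have hδ₁ : 1 ≤ δ := by
    by_contra! h
    linarith [log_nonpos hδ₀.le h.le]
  have hlog : log (δ + 1) ≤ log δ + 1 := by
    have h := log_le_sub_one_of_pos (show 0 < (δ + 1) / δ by positivity)
    rw [log_div (by positivity) hδ₀.ne', same_add_div hδ₀.ne'] at h
    have : 1 / δ ≤ 1 := (div_le_one hδ₀).2 hδ₁
    linarith
  have hx : 1 ≤ n / δ := (one_le_div hδ₀).2 hδn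
  have hy : n / (δ + 1) ≤ n / δ := div_le_div_of_nonneg_left (by linarith) hδ₀ (by linarith)
  have hy₀ : 0 ≤ n / (δ + 1) := div_nonneg (by linarith) (by linarith)
  calc n / (δ + 1) * (2 * log (δ + 1) + 5) + 3 ≤ n / δ * (2 * log δ + 10) := by nlinarith
    _ ≤ n / δ * (b * log δ) := by gcongr; nlinarith
    _ = b * log δ * n / δ := by ring

theorem stmt_19 (b : ℝ) (hb : 2.5 < b) :
    ∃ δ₀ : ℕ, ∀ (V : Type) [Fintype V] (G : SimpleGraph V) [DecidableRel G.Adj],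
      G.Connected → δ₀ ≤ G.minDegree →
      (rvc G : ℝ) ≤ b * Real.log (G.minDegree : ℝ) * (Fintype.card V : ℝ) / (G.minDegree : ℝ) := by
  refine ⟨⌈exp 20⌉₊, fun V _ G _ hG hδ ↦ ?_⟩
  have hexp : exp 20 ≤ G.minDegree := Nat.ceil_le.1 hδ
  have hδ₀ : (0 : ℝ) < G.minDegree := (exp_pos 20).trans_le hexp
  have hδn : (G.minDegree : ℝ) ≤ Fintype.card V := by
    obtain ⟨v⟩ := hG.nonempty
    exact_mod_cast (G.minDegree_le_degree v).trans (G.degree_lt_card_verts v).le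
  obtain ⟨B, hB, hcard⟩ := exists_isConnectedDominating_card_le hG
  calc (rvc G : ℝ) ≤ #B := by exact_mod_cast rvc_le_card_of_isConnectedDominating hB
    _ ≤ _ := hcard
    _ ≤ _ := div_add_one_mul_log_add_le_mul_log_div hb hδ₀ ((le_log_iff_exp_le hδ₀).2 hexp) hδn
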